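/- For every CNF Γ, the CNF Γ ∪ μ(Γ) is unsatisfiable, where μ(Γ) is the set of clauses E such that the assignment ¬E minimally satisfies Γ. -/

import Mathlib

open Classical

abbrev Var := ℕ
abbrev Lit := Var × Bool

def negLit (l : Lit) : Lit := (l.1, !l.2)

abbrev Clause := Finset Lit

/-- A set of literals is tautological if it contains a complementary pair. -/
def Tauto (S : Finset Lit) : Prop := ∃ l ∈ S, negLit l ∈ S

abbrev CNF := Set Clause

abbrev Assign := Var → Bool

def SatLit (α : Assign) (l : Lit) : Prop := α l.1 = l.2
def SatClause (α : Assign) (C : Clause) : Prop := ∃ l ∈ C, SatLit α l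
def SatCNF (α : Assign) (Γ : CNF) : Prop := ∀ C ∈ Γ, SatClause α C
def Satisfiable (Γ : CNF) : Prop := ∃ α, SatCNF α Γ
def Equisat (Γ Δ : CNF) : Prop := Satisfiable Γ ↔ Satisfiable Δ

/-- `C` is a blocked clause for the literal `p` with respect to `Γ`. -/
def Blocked (C : Clause) (p : Lit) (Γ : CNF) : Prop :=
  p ∈ C ∧ ∀ D ∈ Γ, negLit p ∈ D → Tauto (C.erase p ∪ D.erase (negLit p))

def negSet (L : Finset Lit) : Finset Lit := L.image negLit

/-- `C` is a set-blocked clause for `L` with respect to `Γ`. -/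
def SetBlocked (C : Clause) (L : Finset Lit) (Γ : CNF) : Prop :=
  L.Nonempty ∧ L ⊆ C ∧
    ∀ D ∈ Γ, (D ∩ negSet L).Nonempty → D ∩ L = ∅ →
      Tauto ((C \ L) ∪ (D \ negSet L))

def varsClause (C : Clause) : Finset Var := C.image Prod.fst
def varsCNF (Γ : CNF) : Set Var := {v | ∃ C ∈ Γ, v ∈ varsClause C}

/-- Partial assignments. -/
abbrev PAssign := Var → Option Bool

def restrictClause (α : PAssign) (C : Clause) : Clause :=
  C.filter fun l => α l.1 ≠ some (!l.2)

def PSatClause' (α : PAssign) (C : Clause) : Prop := ∃ l ∈ C, α l.1 = some l.2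

def restrictCNF (α : PAssign) (Γ : CNF) : CNF :=
  {E | ∃ C ∈ Γ, ¬ PSatClause' α C ∧ E = restrictClause α C}

/-- `E` is a resolvent of `F` and `G`. -/
def Resolvent (E F G : Clause) : Prop :=
  ∃ (x : Var) (A B : Clause), x ∉ varsClause A ∧ x ∉ varsClause B ∧
    F = insert (x, true) A ∧ G = insert (x, false) B ∧
    E = A ∪ B ∧ ¬ Tauto (A ∪ B)

/-- One step of a resolution proof: add a resolvent or a weakening. -/
def ResStep (Γ Γ' : CNF) : Prop :=
  ∃ C, Γ' = Γ ∪ {C} ∧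
    ((∃ F ∈ Γ, ∃ G ∈ Γ, Resolvent C F G) ∨ (∃ D ∈ Γ, D ⊆ C ∧ ¬ Tauto C))

/-- A resolution proof (refutation) of `Γ`. -/
def ResProofOf (Γ : CNF) (prf : List CNF) : Prop :=
  prf.head? = some Γ ∧ (∃ Δ, prf.getLast? = some Δ ∧ (∅ : Clause) ∈ Δ) ∧
    List.Chain' ResStep prf

/-- One step of a unit propagation proof: resolve against a unit clause, or weaken. -/
def UnitStep (Γ Γ' : CNF) : Prop :=
  ∃ C, Γ' = Γ ∪ {C} ∧
    ((∃ l, ({negLit l} : Clause) ∈ Γ ∧ l.1 ∉ varsClause C ∧ insert l C ∈ Γ)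
      ∨ (∃ D ∈ Γ, D ⊆ C ∧ ¬ Tauto C))

/-- `Γ` has a unit propagation refutation. -/
def UPRefutes (Γ : CNF) : Prop :=
  ∃ prf : List CNF, prf.head? = some Γ ∧ (∃ Δ, prf.getLast? = some Δ ∧ (∅ : Clause) ∈ Δ) ∧
    List.Chain' UnitStep prf

def negUnits (L : Finset Lit) : CNF := {C | ∃ p ∈ L, C = {negLit p}}

/-- `Γ ⊢₁ C`. -/
def UPDerives (Γ : CNF) (C : Clause) : Prop := UPRefutes (Γ ∪ negUnits C)

/-- Partial assignments as consistent sets of literals. -/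
def Consistent (α : Set Lit) : Prop := ∀ l ∈ α, negLit l ∉ α
def PSatClause (α : Set Lit) (C : Clause) : Prop := ∃ l ∈ C, l ∈ α
def PSatCNF (α : Set Lit) (Γ : CNF) : Prop := ∀ C ∈ Γ, PSatClause α C
def MinSat (α : Set Lit) (Γ : CNF) : Prop :=
  Consistent α ∧ PSatCNF α Γ ∧ ∀ β ⊂ α, ¬ PSatCNF β Γ

/-- `μ(Γ)`: clauses whose negation minimally satisfies `Γ`. -/
def mu (Γ : CNF) : CNF := {E | MinSat (↑(E.image negLit)) Γ}

/-- Projection of `Γ` onto a literal. -/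
def proj (p : Lit) (Γ : CNF) : CNF := {E | ∃ D ∈ Γ, p ∈ D ∧ E = D.erase p}


/-! A satisfying total assignment makes true a literal of every clause, and only finitely many
literals occur in a finite `Γ`, so the true literals occurring in `Γ` contain a minimally
satisfying set `γ`. Then `¬γ ∈ μ(Γ)`, and this clause is falsified by the assignment, since it
consists of negations of true literals. -/

@[simp]
lemma negLit_negLit (l : Lit) : negLit (negLit l) = l := by
  simp [negLit]

lemma negSet_negSet (L : Finset Lit) : negSet (negSet L) = L := by
  simp [negSet, Finset.image_image, Function.comp_def]

lemma SatLit.not_negLit {α : Assign} {l : Lit} (h : SatLit α l) : ¬ SatLit α (negLit l) := by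
  simp_all [SatLit, negLit]

lemma consistent_of_forall_satLit {α : Assign} {β : Set Lit} (h : ∀ l ∈ β, SatLit α l) :
    Consistent β :=
  fun l hl hnl => (h l hl).not_negLit (h _ hnl)

lemma negSet_mem_mu {Γ : CNF} {γ : Finset Lit} (h : MinSat ↑γ Γ) : negSet γ ∈ mu Γ := by
  change MinSat ↑(negSet (negSet γ)) Γ
  rwa [negSet_negSet]

lemma PSatCNF.exists_minimal_subset {S : Set Lit} {Γ : CNF} (hS : S.Finite) (h : PSatCNF S Γ) :
    ∃ γ ⊆ S, PSatCNF γ Γ ∧ ∀ δ ⊂ γ, ¬ PSatCNF δ Γ := by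
  obtain ⟨γ, hγS, ⟨-, hγ⟩, hmin⟩ :=
    (hS.finite_subsets.subset fun δ hδ => hδ.1).exists_le_minimal
      (s := {δ | δ ⊆ S ∧ PSatCNF δ Γ}) ⟨subset_rfl, h⟩
  exact ⟨γ, hγS, hγ, fun δ hδ hδsat =>
    hδ.not_subset (hmin ⟨hδ.subset.trans hγS, hδsat⟩ hδ.subset)⟩

lemma exists_mem_mu_not_satClause {Γ : CNF} (hfin : Γ.Finite) {α : Assign} (hα : SatCNF α Γ) :
    ∃ E ∈ mu Γ, ¬ SatClause α E := by
  set S : Set Lit := {l | SatLit α l ∧ ∃ C ∈ Γ, l ∈ C}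
  have hS : S.Finite :=
    (hfin.biUnion fun C _ => C.finite_toSet).subset fun l ⟨_, C, hC, hl⟩ =>
      Set.mem_biUnion hC hl
  have hSsat : PSatCNF S Γ := fun C hC =>
    let ⟨l, hl, hlα⟩ := hα C hC
    ⟨l, hl, hlα, C, hC, hl⟩
  obtain ⟨γ, hγS, hγsat, hγmin⟩ := hSsat.exists_minimal_subset hS
  lift γ to Finset Lit using hS.subset hγS
  have hγα : ∀ l ∈ (γ : Set Lit), SatLit α l := fun l hl => (hγS hl).1
  refine ⟨negSet γ, negSet_mem_mu ⟨consistent_of_forall_satLit hγα, hγsat, hγmin⟩, ?_⟩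
  rintro ⟨_, hl, hlα⟩
  obtain ⟨m, hm, rfl⟩ := Finset.mem_image.mp hl
  exact (hγα m hm).not_negLit hlα

/-- `Γ ∪ μ(Γ)` is unsatisfiable. -/
theorem mu_unsat (Γ : CNF) (hfin : Γ.Finite) :
    ¬ Satisfiable (Γ ∪ mu Γ) := by
  rintro ⟨α, hα⟩
  obtain ⟨E, hE, hEα⟩ := exists_mem_mu_not_satClause hfin fun C hC => hα C (Or.inl hC)
  exact hEα (hα E (Or.inr hE))
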